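/- If a graph G contains two edge-disjoint triangles, then the second iterated forest graph F(F(G)) contains K_9 as a subgraph. -/

import Mathlib

open Cardinal

variable {V : Type*}

/-- `F` is a maximal forest of `G`: an acyclic subgraph of `G` maximal among
acyclic subgraphs of `G` under inclusion. -/
def IsMaximalForest (G F : SimpleGraph V) : Prop :=
  F ≤ G ∧ F.IsAcyclic ∧ ∀ F' : SimpleGraph V, F' ≤ G → F'.IsAcyclic → F ≤ F' → F' = F

/-- The forest graph of `G`: vertices are the maximal forests of `G`,
two adjacent iff they differ by exactly one edge. -/
def forestGraph (G : SimpleGraph V) :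
    SimpleGraph {F : SimpleGraph V // IsMaximalForest G F} where
  Adj F₁ F₂ := (F₁.1.edgeSet \ F₂.1.edgeSet).encard = 1 ∧
               (F₂.1.edgeSet \ F₁.1.edgeSet).encard = 1
  symm := ⟨fun F₁ F₂ h => ⟨h.2, h.1⟩⟩
  loopless := ⟨fun F h => by simp at h⟩

/-- The set of cycles of `G`, each cycle identified with its edge set. -/
def cycleSet (G : SimpleGraph V) : Set (Set (Sym2 V)) :=
  {s | ∃ (v : V) (c : G.Walk v v), c.IsCycle ∧ s = {e | e ∈ c.edges}}

/-!
A cycle `C` of length `n` in a graph `H` gives an `n`-clique in `F(H)`: extend `C - e₀` to a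
maximal forest `M`; the exchanges `M + e₀ - e`, `e ∈ C`, are maximal forests pairwise differing
in one edge. For two edge-disjoint triangles, which share at most one vertex, there is a maximal
forest `T` containing all edges of both but one edge `e₁`, resp. `e₂`, of each. The nine forests
`T + e₁ + e₂ - a - b`, `a` in the first triangle and `b` in the second, form a copy of the rook's
graph `K₃ □ K₃` in `F(G)`. It has a Hamiltonian cycle, hence `F(F(G))` contains `K₉`.
-/

namespace SimpleGraph

variable {G : SimpleGraph V}

theorem reachable_le_of_forall_adj {G' : SimpleGraph V}
    (h : ∀ ⦃x y⦄, G.Adj x y → G'.Reachable x y) : G.Reachable ≤ G'.Reachable := by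
  rw [reachable_eq_reflTransGen, reachable_eq_reflTransGen]
  exact Relation.reflTransGen_closed fun x y hxy ↦ (reachable_iff_reflTransGen x y).1 (h hxy)

theorem edgeSet_fromEdgeSet_of_subset {s : Set (Sym2 V)} (h : s ⊆ G.edgeSet) :
    (fromEdgeSet s).edgeSet = s :=
  (edgeSet_eq_iff _ _).2
    ⟨rfl, Set.subset_compl_iff_disjoint_right.1 (h.trans G.edgeSet_subset_compl_diagSet)⟩

theorem isAcyclic_fromEdgeSet_insert {s : Set (Sym2 V)} {a b : V}
    (hs : (fromEdgeSet s).IsAcyclic) (hab : a ≠ b) (hb : ∀ e ∈ s, b ∉ e) :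
    (fromEdgeSet (insert s(a, b) s)).IsAcyclic := by
  rw [Set.insert_eq, fromEdgeSet_union, sup_comm]
  refine hs.sup_edge_of_not_reachable fun ⟨p⟩ ↦ ?_
  cases p.reverse with
  | nil => exact hab rfl
  | cons h _ => exact hb _ h.1 (Sym2.mem_mk_left _ _)

namespace Walk

theorem IsPath.isAcyclic_fromEdgeSet {u v : V} {p : G.Walk u v} (hp : p.IsPath) :
    (fromEdgeSet {e | e ∈ p.edges}).IsAcyclic := by
  induction p with
  | nil => simp
  | @cons u w _ h q ih =>
    rw [cons_isPath_iff] at hp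
    have hset : {e | e ∈ (cons h q).edges} = insert s(w, u) {e | e ∈ q.edges} := by
      ext; simp [Sym2.eq_swap]
    rw [hset]
    exact isAcyclic_fromEdgeSet_insert (ih hp.1) h.ne.symm
      fun e he hue ↦ hp.2 (mem_support_of_mem_edges he hue)

theorem IsTrail.exists_injective_fin_edges {u v : V} {p : G.Walk u v} (hp : p.IsTrail) {n : ℕ}
    (hn : p.length = n) : ∃ A : Fin n → Sym2 V, Function.Injective A ∧ ∀ i, A i ∈ p.edges := by
  subst hn
  exact ⟨p.edges.get ∘ Fin.cast p.length_edges.symm,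
    (List.nodup_iff_injective_get.1 hp.edges_nodup).comp (Fin.cast_injective _),
    fun _ ↦ List.get_mem _ _⟩

theorem exists_eq_cons_cons_cons_nil {v : V} {c : G.Walk v v} (hl : c.length = 3) :
    ∃ (x y : V) (h₁ : G.Adj v x) (h₂ : G.Adj x y) (h₃ : G.Adj y v),
      c = .cons h₁ (.cons h₂ (.cons h₃ .nil)) := by
  rcases c with _ | ⟨h₁, _ | ⟨h₂, _ | ⟨h₃, _ | ⟨_, _⟩⟩⟩⟩ <;> simp at hl
  exact ⟨_, _, h₁, h₂, h₃, rfl⟩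

theorem mem_edges_of_length_eq_three {v : V} {c : G.Walk v v} (hl : c.length = 3) {a b : V}
    (ha : a ∈ c.support) (hb : b ∈ c.support) (hab : a ≠ b) : s(a, b) ∈ c.edges := by
  obtain ⟨x, y, h₁, h₂, h₃, rfl⟩ := exists_eq_cons_cons_cons_nil hl
  simp only [support_cons, support_nil, List.mem_cons, List.not_mem_nil, or_false] at ha hb
  simp only [edges_cons, edges_nil, List.mem_cons, List.not_mem_nil, or_false]
  rcases ha with rfl | rfl | rfl | rfl <;> rcases hb with rfl | rfl | rfl | rfl <;>
    simp_all [Sym2.eq_swap]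

theorem eq_of_mem_support_of_length_eq_three {v w : V} {c₁ : G.Walk v v} {c₂ : G.Walk w w}
    (hl₁ : c₁.length = 3) (hl₂ : c₂.length = 3) (hdisj : ∀ e ∈ c₁.edges, e ∉ c₂.edges) {a b : V}
    (ha₁ : a ∈ c₁.support) (ha₂ : a ∈ c₂.support) (hb₁ : b ∈ c₁.support)
    (hb₂ : b ∈ c₂.support) : a = b := by
  by_contra hab
  exact hdisj _ (mem_edges_of_length_eq_three hl₁ ha₁ hb₁ hab)
    (mem_edges_of_length_eq_three hl₂ ha₂ hb₂ hab)

/-- For a forest `T` this says that `c` is the fundamental cycle of `e` in `T + e`. -/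
structure IsFundamentalCycle {u : V} (c : G.Walk u u) (T : SimpleGraph V) (e : Sym2 V) :
    Prop where
  isCycle : c.IsCycle
  mem_edges : e ∈ c.edges
  mem_edgeSet : ∀ f ∈ c.edges, f ≠ e → f ∈ T.edgeSet

namespace IsFundamentalCycle

variable {T : SimpleGraph V} {u : V} {c : G.Walk u u} {e : Sym2 V}

theorem mem_insert (hc : c.IsFundamentalCycle T e) {f : Sym2 V} (hf : f ∈ c.edges) :
    f ∈ insert e T.edgeSet := by
  by_cases hfe : f = e
  exacts [Or.inl hfe, Or.inr (hc.mem_edgeSet f hf hfe)]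

theorem insert_subset_edgeSet (hc : c.IsFundamentalCycle T e) (hT : T ≤ G) :
    insert e T.edgeSet ⊆ G.edgeSet :=
  Set.insert_subset (c.edges_subset_edgeSet hc.mem_edges) (edgeSet_mono hT)

end IsFundamentalCycle

end Walk

end SimpleGraph

open SimpleGraph

section MaximalForest

variable {G F : SimpleGraph V}

theorem isMaximalForest_iff_maximal :
    IsMaximalForest G F ↔ Maximal (fun H ↦ H ≤ G ∧ H.IsAcyclic) F := by
  simp only [IsMaximalForest, maximal_iff, and_imp, and_assoc]
  refine and_congr_right fun _ ↦ and_congr_right fun _ ↦ forall_congr' fun H ↦ ?_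
  simp only [eq_comm]

theorem isMaximalForest_iff_reachable_eq :
    IsMaximalForest G F ↔ F ≤ G ∧ F.IsAcyclic ∧ F.Reachable = G.Reachable := by
  rw [isMaximalForest_iff_maximal]
  exact ⟨fun h ↦ ⟨h.prop.1, h.prop.2,
      (maximal_isAcyclic_iff_reachable_eq h.prop.1 h.prop.2).1 h⟩,
    fun ⟨hle, hF, h⟩ ↦ (maximal_isAcyclic_iff_reachable_eq hle hF).2 h⟩

theorem exists_isMaximalForest_ge {P : SimpleGraph V} (hPG : P ≤ G) (hP : P.IsAcyclic) :
    ∃ F, IsMaximalForest G F ∧ P ≤ F := by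
  obtain ⟨F, hPF, hF⟩ := exists_maximal_isAcyclic_of_le_isAcyclic hPG hP
  exact ⟨F, isMaximalForest_iff_maximal.2 hF, hPF⟩

theorem forestGraph_adj_of_edgeSet_eq {F₁ F₂ : {F // IsMaximalForest G F}}
    {U X Y : Set (Sym2 V)} (hX : X ⊆ U) (hY : Y ⊆ U) (hXY : (X \ Y).encard = 1)
    (hYX : (Y \ X).encard = 1) (h₁ : F₁.1.edgeSet = U \ X) (h₂ : F₂.1.edgeSet = U \ Y) :
    (forestGraph G).Adj F₁ F₂ :=
  ⟨by rwa [h₁, h₂, sdiff_sdiff_sdiff_cancel_left hY],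
    by rwa [h₁, h₂, sdiff_sdiff_sdiff_cancel_left hX]⟩

end MaximalForest

theorem IsMaximalForest.exchange {H M : SimpleGraph V} {u : V} {c : H.Walk u u} {e₀ e : Sym2 V}
    (hM : IsMaximalForest H M) (hc : c.IsFundamentalCycle M e₀) (he : e ∈ c.edges) :
    IsMaximalForest H (fromEdgeSet (insert e₀ M.edgeSet \ {e})) := by
  obtain ⟨hMH, hMac, hMreach⟩ := isMaximalForest_iff_reachable_eq.1 hM
  have he₀M : e₀ ∉ M.edgeSet := fun h ↦
    hMac (c.transfer M fun f hf ↦ (hc.mem_insert hf).elim (· ▸ h) id) (hc.isCycle.transfer _)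
  by_cases hee : e = e₀
  · rwa [hee, Set.insert_sdiff_self_of_notMem he₀M, fromEdgeSet_edgeSet]
  set N := fromEdgeSet (insert e₀ M.edgeSet \ {e}) with hN
  have hNH : N ≤ H := (fromEdgeSet_le _).2 fun f hf ↦ hc.insert_subset_edgeSet hMH hf.1.1
  induction e using Sym2.ind with | h a b => ?_
  induction e₀ using Sym2.ind with | h u₀ v₀ => ?_
  have hNab : N.Reachable a b := by
    have hcK : ∀ f ∈ c.edges, f ∈ (fromEdgeSet (insert s(u₀, v₀) M.edgeSet)).edgeSet :=
      fun f hf ↦ by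
        rw [edgeSet_fromEdgeSet]
        exact ⟨hc.mem_insert hf, H.not_isDiag_of_mem_edgeSet (c.edges_subset_edgeSet hf)⟩
    have := (adj_and_reachable_delete_edges_iff_exists_cycle.2
      ⟨u, c.transfer _ hcK, hc.isCycle.transfer hcK, by rwa [Walk.edges_transfer]⟩).2
    rwa [deleteEdges, ← fromEdgeSet_sdiff] at this
  have hMN : M.Reachable ≤ N.Reachable := reachable_le_of_forall_adj fun x y hxy ↦ by
    by_cases hxy' : s(x, y) = s(a, b)
    · rcases Sym2.eq_iff.1 hxy' with ⟨rfl, rfl⟩ | ⟨rfl, rfl⟩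
      exacts [hNab, hNab.symm]
    · exact Adj.reachable ⟨⟨Or.inr hxy, hxy'⟩, hxy.ne⟩
  have hN_eq : N = M.deleteEdges {s(a, b)} ⊔ edge u₀ v₀ := by
    ext x y
    simp only [hN, fromEdgeSet_adj, sup_adj, deleteEdges_adj, adj_edge, Set.mem_sdiff,
      Set.mem_insert_iff, Set.mem_singleton_iff, mem_edgeSet]
    grind [SimpleGraph.Adj.ne]
  -- if `u₀` and `v₀` were joined in `M - e`, so would be `a` and `b`; but `e` is a bridge of `M`
  have hNac : N.IsAcyclic := by
    rw [hN_eq]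
    refine (hMac.anti (deleteEdges_le _)).sup_edge_of_not_reachable fun h₀ ↦ ?_
    refine isBridge_iff.1 (isAcyclic_iff_forall_isBridge.1 hMac (hc.mem_edgeSet _ he hee))
      (reachable_le_of_forall_adj (fun x y hxy ↦ ?_) _ _ (hN_eq ▸ hNab))
    rcases hxy with hxy | hxy
    · exact hxy.reachable
    · rcases (edge_adj _ _ _ _).1 hxy with ⟨⟨rfl, rfl⟩ | ⟨rfl, rfl⟩, -⟩
      exacts [h₀, h₀.symm]
  exact isMaximalForest_iff_reachable_eq.2
    ⟨hNH, hNac, le_antisymm (fun x y h ↦ h.mono hNH) (hMreach ▸ hMN)⟩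

theorem IsMaximalForest.exchange₂ {G T : SimpleGraph V} {u w : V} {c₁ : G.Walk u u}
    {c₂ : G.Walk w w} {e₁ e₂ a b : Sym2 V} (hT : IsMaximalForest G T)
    (hc₁ : c₁.IsFundamentalCycle T e₁) (hc₂ : c₂.IsFundamentalCycle T e₂)
    (hdisj : ∀ e ∈ c₁.edges, e ∉ c₂.edges) (ha : a ∈ c₁.edges) (hb : b ∈ c₂.edges) :
    IsMaximalForest G (fromEdgeSet (insert e₂ (insert e₁ T.edgeSet) \ {a, b})) := by
  have hedge : (fromEdgeSet (insert e₁ T.edgeSet \ {a})).edgeSet = insert e₁ T.edgeSet \ {a} :=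
    edgeSet_fromEdgeSet_of_subset (Set.sdiff_subset.trans (hc₁.insert_subset_edgeSet hT.1))
  have hc₂' : c₂.IsFundamentalCycle (fromEdgeSet (insert e₁ T.edgeSet \ {a})) e₂ := by
    refine ⟨hc₂.isCycle, hc₂.mem_edges, fun f hf hfe ↦ ?_⟩
    rw [hedge]
    exact ⟨Or.inr (hc₂.mem_edgeSet f hf hfe), fun hfa ↦ hdisj a ha (hfa ▸ hf)⟩
  have hae₂ : a ≠ e₂ := fun h ↦ hdisj a ha (h ▸ hc₂.mem_edges)
  have := (hT.exchange hc₁ ha).exchange hc₂' hb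
  rwa [hedge, show insert e₂ (insert e₁ T.edgeSet \ {a}) \ {b} =
      insert e₂ (insert e₁ T.edgeSet) \ {a, b} by ext; simp; grind] at this

theorem SimpleGraph.Walk.IsCycle.exists_isFundamentalCycle {H : SimpleGraph V} {u : V}
    {c : H.Walk u u} (hc : c.IsCycle) :
    ∃ M e₀, IsMaximalForest H M ∧ c.IsFundamentalCycle M e₀ := by
  cases c with
  | nil => exact absurd rfl hc.ne_nil
  | @cons _ v _ h p =>
    have hp := ((Walk.cons_isCycle_iff p h).1 hc).1
    obtain ⟨M, hM, hpM⟩ := exists_isMaximalForest_ge (P := fromEdgeSet {e | e ∈ p.edges})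
      ((fromEdgeSet_le _).2 fun e he ↦ p.edges_subset_edgeSet he.1) hp.isAcyclic_fromEdgeSet
    refine ⟨M, s(u, v), hM, ⟨hc, by simp, fun f hf hfu ↦ edgeSet_mono hpM ?_⟩⟩
    rw [Walk.edges_cons, List.mem_cons] at hf
    have hfp := hf.resolve_left hfu
    rw [edgeSet_fromEdgeSet]
    exact ⟨hfp, H.not_isDiag_of_mem_edgeSet (p.edges_subset_edgeSet hfp)⟩

theorem SimpleGraph.Walk.IsCycle.exists_isNClique_forestGraph {H : SimpleGraph V} {u : V}
    {c : H.Walk u u} (hc : c.IsCycle) : ∃ t, (forestGraph H).IsNClique c.length t := by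
  obtain ⟨M, e₀, hM, hfc⟩ := hc.exists_isFundamentalCycle
  obtain ⟨A, hA, hAc⟩ := hc.isTrail.exists_injective_fin_edges rfl
  have hAU : ∀ i, {A i} ⊆ insert e₀ M.edgeSet := fun i ↦
    Set.singleton_subset_iff.2 (hfc.mem_insert (hAc i))
  have hedge : ∀ i, (fromEdgeSet (insert e₀ M.edgeSet \ {A i})).edgeSet =
      insert e₀ M.edgeSet \ {A i} := fun i ↦
    edgeSet_fromEdgeSet_of_subset (Set.sdiff_subset.trans (hfc.insert_subset_edgeSet hM.1))
  let φ : (⊤ : SimpleGraph (Fin c.length)) →g forestGraph H :=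
    { toFun i := ⟨_, hM.exchange hfc (hAc i)⟩
      map_rel' {i j} hij := forestGraph_adj_of_edgeSet_eq (hAU i) (hAU j)
        (by rw [Set.sdiff_singleton_eq_self (by simpa using hA.ne hij.symm), Set.encard_singleton])
        (by rw [Set.sdiff_singleton_eq_self (by simpa using hA.ne hij), Set.encard_singleton])
        (hedge i) (hedge j) }
  have hφ : Function.Injective φ := fun i j hij ↦ by
    have := congrArg (fun F ↦ F.1.edgeSet) hij
    simp only [φ, RelHom.coeFn_mk, hedge] at this
    have hij' : ({A i} : Set (Sym2 V)) = {A j} := by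
      rw [← Set.sdiff_sdiff_cancel_left (hAU i), this, Set.sdiff_sdiff_cancel_left (hAU j)]
    exact hA (Set.singleton_eq_singleton_iff.1 hij')
  exact ⟨_, by simpa using isNClique_map_copy_top (φ.toCopy hφ)⟩

theorem IsMaximalForest.boxProd_top_isContained_forestGraph {ι κ : Type*}
    {G T : SimpleGraph V} {u w : V} {c₁ : G.Walk u u} {c₂ : G.Walk w w} {e₁ e₂ : Sym2 V}
    (hT : IsMaximalForest G T) (hc₁ : c₁.IsFundamentalCycle T e₁)
    (hc₂ : c₂.IsFundamentalCycle T e₂) (hdisj : ∀ e ∈ c₁.edges, e ∉ c₂.edges)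
    {A : ι → Sym2 V} {B : κ → Sym2 V} (hA : Function.Injective A) (hB : Function.Injective B)
    (hAc : ∀ i, A i ∈ c₁.edges) (hBc : ∀ j, B j ∈ c₂.edges) :
    ((⊤ : SimpleGraph ι) □ (⊤ : SimpleGraph κ)) ⊑ forestGraph G := by
  have hAB : ∀ i j, A i ≠ B j := fun i j h ↦ hdisj _ (hAc i) (h ▸ hBc j)
  have hsub : ∀ x : ι × κ, {A x.1, B x.2} ⊆ insert e₂ (insert e₁ T.edgeSet) := fun x ↦
    Set.pair_subset (Set.mem_insert_of_mem _ (hc₁.mem_insert (hAc x.1)))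
      (Set.insert_subset_insert (Set.subset_insert _ _) (hc₂.mem_insert (hBc x.2)))
  have hedge : ∀ x : ι × κ,
      (fromEdgeSet (insert e₂ (insert e₁ T.edgeSet) \ {A x.1, B x.2})).edgeSet =
        insert e₂ (insert e₁ T.edgeSet) \ {A x.1, B x.2} := fun x ↦
    edgeSet_fromEdgeSet_of_subset (Set.sdiff_subset.trans (Set.insert_subset
      (c₂.edges_subset_edgeSet hc₂.mem_edges) (hc₁.insert_subset_edgeSet hT.1)))
  have hdiff : ∀ x y : ι × κ, ((⊤ : SimpleGraph ι) □ (⊤ : SimpleGraph κ)).Adj x y →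
      ({A x.1, B x.2} \ {A y.1, B y.2} : Set (Sym2 V)).encard = 1 := by
    rintro ⟨i, j⟩ ⟨i', j'⟩ hxy
    rw [Set.encard_eq_one]
    rcases boxProd_adj.1 hxy with ⟨hii', rfl⟩ | ⟨hjj', rfl⟩
    · have := hA.ne (by simpa using hii')
      exact ⟨A i, by ext; simp; grind [hAB i j]⟩
    · have := hB.ne (by simpa using hjj')
      exact ⟨B j, by ext; simp; grind [hAB i j]⟩
  let φ : ((⊤ : SimpleGraph ι) □ (⊤ : SimpleGraph κ)) →g forestGraph G :=
    { toFun x := ⟨_, hT.exchange₂ hc₁ hc₂ hdisj (hAc x.1) (hBc x.2)⟩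
      map_rel' {x y} hxy := forestGraph_adj_of_edgeSet_eq (hsub x) (hsub y) (hdiff x y hxy)
        (hdiff y x hxy.symm) (hedge x) (hedge y) }
  refine ⟨φ.toCopy fun x y hxy ↦ ?_⟩
  have := congrArg (fun F ↦ F.1.edgeSet) hxy
  simp only [φ, RelHom.coeFn_mk, hedge] at this
  have hxy' : ({A x.1, B x.2} : Set (Sym2 V)) = {A y.1, B y.2} := by
    rw [← Set.sdiff_sdiff_cancel_left (hsub x), this, Set.sdiff_sdiff_cancel_left (hsub y)]
  rcases Set.pair_eq_pair_iff.1 hxy' with ⟨h₁, h₂⟩ | ⟨h₁, -⟩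
  · exact Prod.ext (hA h₁) (hB h₂)
  · exact absurd h₁ (hAB _ _)

theorem exists_isMaximalForest_of_paths {G : SimpleGraph V} {a b c p q r : V}
    (hab : G.Adj a b) (hbc : G.Adj b c) (hac : a ≠ c) (hpq : G.Adj p q) (hqr : G.Adj q r)
    (hpr : p ≠ r) (hq : q ≠ a ∧ q ≠ b ∧ q ≠ c) (hr : r ≠ a ∧ r ≠ b ∧ r ≠ c) :
    ∃ T, IsMaximalForest G T ∧
      s(a, b) ∈ T.edgeSet ∧ s(b, c) ∈ T.edgeSet ∧ s(p, q) ∈ T.edgeSet ∧ s(q, r) ∈ T.edgeSet := by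
  set S : Set (Sym2 V) := insert s(q, r) (insert s(p, q) (insert s(b, c) (insert s(a, b) ∅)))
  -- each edge, added in turn, has an endpoint new to the previous ones
  have hS : (fromEdgeSet S).IsAcyclic := by
    refine isAcyclic_fromEdgeSet_insert (isAcyclic_fromEdgeSet_insert
      (isAcyclic_fromEdgeSet_insert (isAcyclic_fromEdgeSet_insert (by simp) hab.ne (by simp))
        hbc.ne ?_) hpq.ne ?_) hqr.ne ?_ <;> simp <;> grind [hab.ne, hbc.ne, hpq.ne, hqr.ne]
  have hSG : S ⊆ G.edgeSet := by
    simp only [S, Set.insert_subset_iff, Set.empty_subset, and_true]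
    exact ⟨hqr, hpq, hbc, hab⟩
  obtain ⟨T, hT, hST⟩ :=
    exists_isMaximalForest_ge ((fromEdgeSet_le _).2 (Set.sdiff_subset.trans hSG)) hS
  have hST' : S ⊆ T.edgeSet := edgeSet_fromEdgeSet_of_subset hSG ▸ edgeSet_mono hST
  exact ⟨T, hT, hST' (by simp [S]), hST' (by simp [S]), hST' (by simp [S]), hST' (by simp [S])⟩

theorem exists_isMaximalForest_isFundamentalCycle_of_triangles {G : SimpleGraph V}
    {v₁ v₂ : V} {c₁ : G.Walk v₁ v₁} {c₂ : G.Walk v₂ v₂} (h₁ : c₁.IsCycle) (hl₁ : c₁.length = 3)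
    (h₂ : c₂.IsCycle) (hl₂ : c₂.length = 3) (hdisj : ∀ e ∈ c₁.edges, e ∉ c₂.edges) :
    ∃ T e₁ e₂, IsMaximalForest G T ∧ c₁.IsFundamentalCycle T e₁ ∧
      c₂.IsFundamentalCycle T e₂ := by
  classical
  -- rotate `c₂` to start at its common vertex with `c₁`, if there is one
  obtain ⟨u, hu, hshared⟩ : ∃ u ∈ c₂.support, ∀ w ∈ c₂.support, w ∈ c₁.support → w = u := by
    by_cases h : ∃ w ∈ c₂.support, w ∈ c₁.support
    · obtain ⟨w, hw₂, hw₁⟩ := h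
      exact ⟨w, hw₂, fun w' hw₂' hw₁' ↦
        Walk.eq_of_mem_support_of_length_eq_three hl₁ hl₂ hdisj hw₁' hw₂' hw₁ hw₂⟩
    · push Not at h
      exact ⟨v₂, c₂.start_mem_support, fun w hw₂ hw₁ ↦ absurd hw₁ (h w hw₂)⟩
  obtain ⟨q, r, huq, hqr, hru, hc₂⟩ := Walk.exists_eq_cons_cons_cons_nil
    (by rwa [Walk.length_rotate] : (c₂.rotate u hu).length = 3)
  have hmem₂ : ∀ e, e ∈ c₂.edges ↔ e = s(u, q) ∨ e = s(q, r) ∨ e = s(r, u) := fun e ↦ by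
    simp [← (c₂.rotate_edges u hu).mem_iff, hc₂]
  have hoff : ∀ w, s(u, w) ∈ c₂.edges → w ≠ u → w ∉ c₁.support := fun w hw hwu hw₁ ↦
    hwu (hshared w (Walk.snd_mem_support_of_mem_edges _ hw) hw₁)
  have hq := hoff q ((hmem₂ _).2 (Or.inl rfl)) huq.ne'
  have hr := hoff r ((hmem₂ _).2 (Or.inr (Or.inr Sym2.eq_swap))) hru.ne
  obtain ⟨x, y, hv₁x, hxy, hyv₁, rfl⟩ := Walk.exists_eq_cons_cons_cons_nil hl₁
  simp only [Walk.support_cons, Walk.support_nil, List.mem_cons, List.not_mem_nil, or_false,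
    not_or] at hq hr
  obtain ⟨T, hT, h₁T, h₂T, h₃T, h₄T⟩ := exists_isMaximalForest_of_paths hv₁x hxy
    hyv₁.ne.symm huq hqr hru.ne.symm ⟨hq.1, hq.2.1, hq.2.2.1⟩ ⟨hr.1, hr.2.1, hr.2.2.1⟩
  refine ⟨T, s(y, v₁), s(r, u), hT, ⟨h₁, by simp, fun f hf hfe ↦ ?_⟩,
    ⟨h₂, (hmem₂ _).2 (by simp), fun f hf hfe ↦ ?_⟩⟩
  · simp only [Walk.edges_cons, Walk.edges_nil, List.mem_cons, List.not_mem_nil, or_false] at hf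
    rcases hf with rfl | rfl | rfl
    exacts [h₁T, h₂T, absurd rfl hfe]
  · rcases (hmem₂ f).1 hf with rfl | rfl | rfl
    exacts [h₃T, h₄T, absurd rfl hfe]

theorem exists_isCycle_length_nine_boxProd_top :
    ∃ (x : Fin 3 × Fin 3) (c : ((⊤ : SimpleGraph (Fin 3)) □ (⊤ : SimpleGraph (Fin 3))).Walk x x),
      c.IsCycle ∧ c.length = 9 := by
  let c : ((⊤ : SimpleGraph (Fin 3)) □ (⊤ : SimpleGraph (Fin 3))).Walk (0, 0) (0, 0) :=
    .cons (v := (0, 1)) (by simp [boxProd_adj]) <| .cons (v := (0, 2)) (by simp [boxProd_adj]) <|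
    .cons (v := (1, 2)) (by simp [boxProd_adj]) <| .cons (v := (2, 2)) (by simp [boxProd_adj]) <|
    .cons (v := (2, 1)) (by simp [boxProd_adj]) <| .cons (v := (1, 1)) (by simp [boxProd_adj]) <|
    .cons (v := (1, 0)) (by simp [boxProd_adj]) <| .cons (v := (2, 0)) (by simp [boxProd_adj]) <|
    .cons (by simp [boxProd_adj]) .nil
  refine ⟨_, c, ?_, rfl⟩
  rw [Walk.isCycle_def, Walk.isTrail_def]
  decide

/-- If `G` contains two edge-disjoint triangles, then `F(F(G))` contains `K₉`. -/
theorem two_triangles_K9 (G : SimpleGraph V) (v₁ v₂ : V)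
    (c₁ : G.Walk v₁ v₁) (c₂ : G.Walk v₂ v₂)
    (h₁ : c₁.IsCycle) (hl₁ : c₁.length = 3)
    (h₂ : c₂.IsCycle) (hl₂ : c₂.length = 3)
    (hdisj : ∀ e : Sym2 V, e ∈ c₁.edges → e ∉ c₂.edges) :
    ∃ t, (forestGraph (forestGraph G)).IsNClique 9 t := by
  obtain ⟨T, e₁, e₂, hT, hc₁, hc₂⟩ :=
    exists_isMaximalForest_isFundamentalCycle_of_triangles h₁ hl₁ h₂ hl₂ hdisj
  obtain ⟨A, hA, hAc⟩ := h₁.isTrail.exists_injective_fin_edges hl₁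
  obtain ⟨B, hB, hBc⟩ := h₂.isTrail.exists_injective_fin_edges hl₂
  obtain ⟨φ⟩ := hT.boxProd_top_isContained_forestGraph hc₁ hc₂ hdisj hA hB hAc hBc
  obtain ⟨x, c, hc, hlen⟩ := exists_isCycle_length_nine_boxProd_top
  rw [← hlen, ← Walk.length_map φ.toHom]
  exact ((Walk.isCycle_map_iff_of_injective φ.injective).2 hc).exists_isNClique_forestGraph
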